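/- arXiv:2001.04728 — 6 statements merged into one kernel-verified Lean document; each statement's English description precedes it below -/
import Mathlib

section
/- Let D be a nontrivial 2-(v,k,λ) design, let G ≤ Aut(D) be flag-transitive, and let α be a point of D. Then |G_α|³ > λ|G|. -/
/-- The set `Bs` of blocks forms a `2`-`(v, k, lam)` design on the point set `P`:
there are `v` points, every block is a `k`-element subset of `P`, and any two
distinct points lie in exactly `lam` common blocks. -/
def IsTwoDesign (v k lam : ℕ) (P : Type*) (Bs : Set (Set P)) : Prop :=
  Nat.card P = v ∧
  (∀ B ∈ Bs, Nat.card B = k) ∧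
  ∀ x y : P, x ≠ y → Nat.card {B : Set P | B ∈ Bs ∧ x ∈ B ∧ y ∈ B} = lam

/-- Every element of `G` is an automorphism of the design with block set `Bs`. -/
def IsAutomGroup {P : Type*} (G : Subgroup (Equiv.Perm P)) (Bs : Set (Set P)) : Prop :=
  ∀ g ∈ G, ∀ B ∈ Bs, (⇑g) '' B ∈ Bs

/-- `G` is transitive on the flags (incident point-block pairs) of the design. -/
def IsFlagTransitive {P : Type*} (G : Subgroup (Equiv.Perm P)) (Bs : Set (Set P)) : Prop :=
  ∀ B₁ ∈ Bs, ∀ B₂ ∈ Bs, ∀ x₁ ∈ B₁, ∀ x₂ ∈ B₂,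
    ∃ g ∈ G, (⇑g) '' B₁ = B₂ ∧ g x₁ = x₂

/-- The stabilizer in `G` of the point `α`. -/
def pointStab {P : Type*} (G : Subgroup (Equiv.Perm P)) (α : P) : Subgroup (Equiv.Perm P) :=
  G ⊓ MulAction.stabilizer (Equiv.Perm P) α

/-!
Let `r` be the number of blocks through a point. Counting pairs `(y, B)` with `y ≠ α` and
`α, y ∈ B` gives `r (k - 1) = λ (v - 1)`, so `λ < r` and `λ v < r k`. Fisher's inequality `v ≤ b`
(the Gram matrix `N Nᵀ = (r - λ) I + λ J` of the incidence matrix is positive definite, so `N` has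
rank `v`) and the flag count `b k = v r` give `k ≤ r`, hence `λ v < r²`. Flag-transitivity makes
`G` transitive on points, so `|G| = v |G_α|`, and makes `G_α` transitive on the `r` blocks
through `α`, so `r ≤ |G_α|`. Therefore `λ |G| = λ v |G_α| < r² |G_α| ≤ |G_α|³`.
-/

open Finset Matrix
open scoped Classical

section Design

variable {P : Type*} [Fintype P]

noncomputable def blocksThrough (Bs : Set (Set P)) (x : P) : Finset (Set P) :=
  {B ∈ Bs.toFinset | x ∈ B}

noncomputable def incidenceMatrix (R : Type*) [Zero R] [One R] (Bs : Set (Set P)) :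
    Matrix P Bs R :=
  of fun p B => if p ∈ (B : Set P) then 1 else 0

theorem incidenceMatrix_mul_transpose_apply {R : Type*} [NonAssocSemiring R]
    (Bs : Set (Set P)) (p q : P) :
    (incidenceMatrix R Bs * (incidenceMatrix R Bs)ᵀ) p q =
      #{B ∈ blocksThrough Bs p | q ∈ B} := by
  simp only [mul_apply, incidenceMatrix, transpose_apply, of_apply]
  rw [← Finset.sum_subtype Bs.toFinset (fun _ => Set.mem_toFinset)
    (fun B => (if p ∈ B then 1 else 0) * (if q ∈ B then (1 : R) else 0)), blocksThrough,
    filter_filter, ← sum_boole]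
  refine sum_congr rfl fun B _ => ?_
  by_cases hp : p ∈ B <;> by_cases hq : q ∈ B <;> simp [hp, hq]

namespace IsTwoDesign

variable {v k lam : ℕ} {Bs : Set (Set P)}

theorem card_toFinset_of_mem (hD : IsTwoDesign v k lam P Bs) {B : Set P} (hB : B ∈ Bs) :
    #B.toFinset = k := by
  rw [Set.toFinset_card, ← Nat.card_eq_fintype_card, hD.2.1 B hB]

theorem card_filter_mem_blocksThrough (hD : IsTwoDesign v k lam P Bs) {x y : P} (hxy : x ≠ y) :
    #{B ∈ blocksThrough Bs x | y ∈ B} = lam := by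
  rw [← hD.2.2 x y hxy, Nat.card_coe_set_eq, Set.ncard_eq_toFinset_card']
  congr 1
  ext B
  simp only [blocksThrough, mem_filter, Set.mem_toFinset, Set.mem_ofPred_eq, and_assoc]

theorem card_blocksThrough_mul (hD : IsTwoDesign v k lam P Bs) (x : P) :
    #(blocksThrough Bs x) * (k - 1) = (v - 1) * lam := by
  have hv : #(univ.erase x) = v - 1 := by
    rw [card_erase_of_mem (mem_univ x), card_univ, ← Nat.card_eq_fintype_card, hD.1]
  rw [← hv]
  refine card_mul_eq_card_mul (fun B y => y ∈ B) (fun B hB => ?_) (fun y hy => ?_)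
  · rw [blocksThrough, mem_filter, Set.mem_toFinset] at hB
    rw [← hD.card_toFinset_of_mem hB.1, ← card_erase_of_mem (Set.mem_toFinset.2 hB.2)]
    congr 1
    ext y
    simp [and_comm]
  · exact hD.card_filter_mem_blocksThrough (ne_of_mem_erase hy).symm

theorem card_blocksThrough_eq (hD : IsTwoDesign v k lam P Bs) (hk : 2 ≤ k) (x y : P) :
    #(blocksThrough Bs x) = #(blocksThrough Bs y) :=
  Nat.eq_of_mul_eq_mul_right (by omega)
    ((hD.card_blocksThrough_mul x).trans (hD.card_blocksThrough_mul y).symm)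

theorem lam_lt_card_blocksThrough (hD : IsTwoDesign v k lam P Bs) (hk : 0 < k) (hkv : k < v)
    (hlam : 0 < lam) (x : P) : lam < #(blocksThrough Bs x) := by
  refine Nat.lt_of_mul_lt_mul_right (a := k - 1) ?_
  rw [hD.card_blocksThrough_mul x, mul_comm]
  exact Nat.mul_lt_mul_of_pos_right (by omega) hlam

theorem incidenceMatrix_mul_transpose (hD : IsTwoDesign v k lam P Bs) (hk : 2 ≤ k) (x : P) :
    incidenceMatrix ℚ Bs * (incidenceMatrix ℚ Bs)ᵀ =
      ((#(blocksThrough Bs x) : ℚ) - lam) • 1 + (lam : ℚ) • of fun _ _ => 1 := by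
  ext p q
  rw [incidenceMatrix_mul_transpose_apply]
  rcases eq_or_ne p q with rfl | hpq
  · have hself : {B ∈ blocksThrough Bs p | p ∈ B} = blocksThrough Bs p :=
      filter_true_of_mem fun B hB => (mem_filter.1 hB).2
    simp [hself, hD.card_blocksThrough_eq hk p x]
  · simp [hD.card_filter_mem_blocksThrough hpq, hpq]

theorem card_le_card_blocks (hD : IsTwoDesign v k lam P Bs) (hk : 2 ≤ k) (hkv : k < v)
    (hlam : 0 < lam) : v ≤ Fintype.card Bs := by
  obtain ⟨x⟩ : Nonempty P := by
    rw [← Finite.card_pos_iff, hD.1]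
    omega
  have hlr : (lam : ℚ) < #(blocksThrough Bs x) :=
    mod_cast hD.lam_lt_card_blocksThrough (by omega) hkv hlam x
  have hJ : (of fun _ _ => 1 : Matrix P P ℚ).PosSemidef := by
    simpa [vecMulVec] using posSemidef_vecMulVec_self_star (1 : P → ℚ)
  have hpos : (incidenceMatrix ℚ Bs * (incidenceMatrix ℚ Bs)ᵀ).PosDef := by
    rw [hD.incidenceMatrix_mul_transpose hk x]
    exact (PosDef.one.smul (sub_pos.2 hlr)).add_posSemidef (hJ.smul lam.cast_nonneg)
  calc v = (incidenceMatrix ℚ Bs * (incidenceMatrix ℚ Bs)ᵀ).rank := by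
        rw [rank_of_isUnit _ hpos.isUnit, ← Nat.card_eq_fintype_card, hD.1]
    _ ≤ (incidenceMatrix ℚ Bs).rank := rank_mul_le_left _ _
    _ ≤ Fintype.card Bs := rank_le_card_width _

theorem card_blocks_mul (hD : IsTwoDesign v k lam P Bs) (hk : 2 ≤ k) (x : P) :
    Fintype.card Bs * k = v * #(blocksThrough Bs x) := by
  rw [← Set.toFinset_card, ← hD.1, Nat.card_eq_fintype_card, ← card_univ]
  refine card_mul_eq_card_mul (fun B y => y ∈ B) (fun B hB => ?_) (fun y _ => ?_)
  · rw [← hD.card_toFinset_of_mem (Set.mem_toFinset.1 hB)]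
    congr 1
    ext y
    simp
  · exact hD.card_blocksThrough_eq hk y x

theorem le_card_blocksThrough (hD : IsTwoDesign v k lam P Bs) (hk : 2 ≤ k) (hkv : k < v)
    (hlam : 0 < lam) (x : P) : k ≤ #(blocksThrough Bs x) := by
  refine Nat.le_of_mul_le_mul_left ?_ (by omega : 0 < v)
  calc v * k ≤ Fintype.card Bs * k := Nat.mul_le_mul_right k (hD.card_le_card_blocks hk hkv hlam)
    _ = v * #(blocksThrough Bs x) := hD.card_blocks_mul hk x

theorem lam_mul_lt_sq (hD : IsTwoDesign v k lam P Bs) (hk : 2 ≤ k) (hkv : k < v)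
    (hlam : 0 < lam) (x : P) : lam * v < #(blocksThrough Bs x) ^ 2 := by
  have hrep := hD.card_blocksThrough_mul x
  have hlr := hD.lam_lt_card_blocksThrough (by omega) hkv hlam x
  have hkr := hD.le_card_blocksThrough hk hkv hlam x
  obtain ⟨k, rfl⟩ : ∃ k', k = k' + 1 := ⟨k - 1, by omega⟩
  obtain ⟨v, rfl⟩ : ∃ v', v = v' + 1 := ⟨v - 1, by omega⟩
  simp only [Nat.add_sub_cancel] at hrep
  nlinarith

theorem exists_mem_block (hD : IsTwoDesign v k lam P Bs) (hv : 1 < v) (hlam : 0 < lam) (x : P) :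
    ∃ B ∈ Bs, x ∈ B := by
  obtain ⟨y, hyx⟩ :=
    Fintype.exists_ne_of_one_lt_card (by rwa [← Nat.card_eq_fintype_card, hD.1]) x
  have hpos : 0 < #{B ∈ blocksThrough Bs x | y ∈ B} := by
    rwa [hD.card_filter_mem_blocksThrough hyx.symm]
  obtain ⟨B, hB⟩ := card_pos.1 hpos
  simp only [blocksThrough, mem_filter, Set.mem_toFinset] at hB
  exact ⟨B, hB.1.1, hB.1.2⟩

end IsTwoDesign

end Design

section Group

variable {P : Type*} {Bs : Set (Set P)} {G : Subgroup (Equiv.Perm P)}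

instance [Finite P] (α : P) : Finite (pointStab G α) :=
  inferInstanceAs (Finite ↥(G ⊓ MulAction.stabilizer (Equiv.Perm P) α))

theorem IsFlagTransitive.exists_apply_eq (hft : IsFlagTransitive G Bs) {x y : P}
    (hx : ∃ B ∈ Bs, x ∈ B) (hy : ∃ B ∈ Bs, y ∈ B) : ∃ g ∈ G, g x = y := by
  obtain ⟨B, hB, hxB⟩ := hx
  obtain ⟨C, hC, hyC⟩ := hy
  obtain ⟨g, hg, -, hgx⟩ := hft B hB C hC x hxB y hyC
  exact ⟨g, hg, hgx⟩

theorem card_eq_card_mul_card_pointStab (α : P) (htrans : ∀ y, ∃ g ∈ G, g α = y) :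
    Nat.card G = Nat.card P * Nat.card (pointStab G α) := by
  have hstab : MulAction.stabilizer G α = (MulAction.stabilizer (Equiv.Perm P) α).subgroupOf G :=
    rfl
  have horbit : MulAction.orbit G α = Set.univ :=
    Set.eq_univ_of_forall fun y =>
      let ⟨g, hg, hgy⟩ := htrans y
      ⟨⟨g, hg⟩, hgy⟩
  rw [← (MulAction.stabilizer G α).card_mul_index, MulAction.index_stabilizer, horbit,
    Set.ncard_univ, mul_comm, hstab, pointStab, ← Subgroup.inf_subgroupOf_left,
    Nat.card_congr (Subgroup.subgroupOfEquivOfLe inf_le_left).toEquiv]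

theorem card_blocksThrough_le_card_pointStab [Fintype P] (hGaut : IsAutomGroup G Bs)
    (hft : IsFlagTransitive G Bs) {α : P} {B₀ : Set P} (hB₀ : B₀ ∈ Bs) (hαB₀ : α ∈ B₀) :
    #(blocksThrough Bs α) ≤ Nat.card (pointStab G α) := by
  let blockImage (g : pointStab G α) : blocksThrough Bs α :=
    ⟨(g : Equiv.Perm P) '' B₀, by
      obtain ⟨hgG, hgα⟩ := Subgroup.mem_inf.1 g.2
      simp only [blocksThrough, mem_filter, Set.mem_toFinset]
      exact ⟨hGaut g hgG B₀ hB₀, α, hαB₀, hgα⟩⟩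
  have hsurj : Function.Surjective blockImage := by
    rintro ⟨B, hB⟩
    simp only [blocksThrough, mem_filter, Set.mem_toFinset] at hB
    obtain ⟨g, hg, hgB, hgα⟩ := hft B₀ hB₀ B hB.1 α hαB₀ α hB.2
    exact ⟨⟨g, Subgroup.mem_inf.2 ⟨hg, hgα⟩⟩, Subtype.ext hgB⟩
  rw [← Nat.card_eq_finsetCard]
  exact Nat.card_le_card_of_surjective blockImage hsurj

end Group

/-- If `G` is a flag-transitive group of automorphisms of a nontrivial
`2`-`(v, k, λ)` design and `α` is a point, then `|G_α|³ > λ|G|`. -/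
theorem stab_cube_gt (v k lam : ℕ) (P : Type*) (Bs : Set (Set P))
    (hD : IsTwoDesign v k lam P Bs) (hk : 2 < k) (hkv : k < v)
    (G : Subgroup (Equiv.Perm P)) (hGaut : IsAutomGroup G Bs)
    (hft : IsFlagTransitive G Bs) (α : P) :
    lam * Nat.card G < Nat.card (pointStab G α) ^ 3 := by
  have : Finite P := Nat.finite_of_card_ne_zero (by rw [hD.1]; omega)
  have := Fintype.ofFinite P
  obtain rfl | hlam := Nat.eq_zero_or_pos lam
  · rw [zero_mul]
    exact pow_pos Nat.card_pos 3
  obtain ⟨B, hB, hαB⟩ := hD.exists_mem_block (by omega) hlam α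
  have hcardG : Nat.card G = v * Nat.card (pointStab G α) := by
    rw [← hD.1]
    exact card_eq_card_mul_card_pointStab α fun y =>
      hft.exists_apply_eq ⟨B, hB, hαB⟩ (hD.exists_mem_block (by omega) hlam y)
  have hrs := card_blocksThrough_le_card_pointStab hGaut hft hB hαB
  have hlv := hD.lam_mul_lt_sq hk.le hkv hlam α
  calc lam * Nat.card G = lam * v * Nat.card (pointStab G α) := by rw [hcardG, mul_assoc]
    _ < #(blocksThrough Bs α) ^ 2 * Nat.card (pointStab G α) :=
      Nat.mul_lt_mul_of_pos_right hlv Nat.card_pos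
    _ ≤ Nat.card (pointStab G α) ^ 2 * Nat.card (pointStab G α) := by gcongr
    _ = Nat.card (pointStab G α) ^ 3 := by ring
end

section
/- Let D be a nontrivial 2-(v,k,λ) design with replication number r, let G ≤ Aut(D) be flag-transitive, and let α be a point of D. Then r divides λ·gcd(v−1, |G_α|). -/
/-- Every point lies on exactly `r` blocks (`r` is the replication number). -/
def HasReplication {P : Type*} (Bs : Set (Set P)) (r : ℕ) : Prop :=
  ∀ x : P, Nat.card {B : Set P | B ∈ Bs ∧ x ∈ B} = r

/-! Counting the pairs `(B, y)` with `α, y ∈ B` and `y ≠ α` in two ways gives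
`r (k - 1) = λ (v - 1)`, so `r ∣ λ (v - 1)`. Flag-transitivity makes `G_α` transitive on the `r`
blocks through `α`, so `r ∣ |G_α|` by orbit–stabilizer. Hence `r` divides
`gcd (λ (v - 1), λ |G_α|) = λ gcd (v - 1, |G_α|)`. -/

open Pointwise

section

variable {P : Type*} {Bs : Set (Set P)}

theorem IsTwoDesign.repl_mul_sub_one_eq [Finite P] {v k lam r : ℕ}
    (hD : IsTwoDesign v k lam P Bs) (hr : HasReplication Bs r) (α : P) :
    r * (k - 1) = (v - 1) * lam := by
  classical
  cases nonempty_fintype P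
  obtain ⟨hv, hBk, hpair⟩ := hD
  have hcount := Finset.card_mul_eq_card_mul (fun B y => y ∈ B)
    (s := {B | B ∈ Bs ∧ α ∈ B}.toFinset) (t := Finset.univ.erase α) (m := k - 1) (n := lam)
    ?_ ?_
  · rwa [← Nat.card_eq_card_toFinset, hr, Finset.card_erase_of_mem (Finset.mem_univ _),
      Finset.card_univ, ← Nat.card_eq_fintype_card, hv] at hcount
  · intro B hB
    rw [Set.mem_toFinset] at hB
    rw [← hBk B hB.1, Nat.card_eq_card_toFinset,
      ← Finset.card_erase_of_mem (Set.mem_toFinset.2 hB.2)]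
    congr 1
    ext
    simp only [Finset.bipartiteAbove, Finset.mem_filter, Finset.mem_erase, Finset.mem_univ,
      and_true, Set.mem_toFinset]
  · intro y hy
    rw [← hpair α y (Finset.ne_of_mem_erase hy).symm, Nat.card_eq_card_toFinset]
    congr 1
    ext
    simp only [Finset.bipartiteBelow, Finset.mem_filter, Set.mem_toFinset, Set.mem_ofPred_eq,
      and_assoc]

variable {G : Subgroup (Equiv.Perm P)}

theorem orbit_pointStab_eq_blocks_through (hGaut : IsAutomGroup G Bs)
    (hft : IsFlagTransitive G Bs) {α : P} {B₀ : Set P} (hB₀ : B₀ ∈ Bs) (hα : α ∈ B₀) :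
    MulAction.orbit (pointStab G α) B₀ = {B | B ∈ Bs ∧ α ∈ B} := by
  ext B
  constructor
  · rintro ⟨⟨g, hgG, hgα⟩, rfl⟩
    exact ⟨hGaut g hgG B₀ hB₀, α, hα, hgα⟩
  · rintro ⟨hB, hαB⟩
    obtain ⟨g, hgG, hgB, hgα⟩ := hft B₀ hB₀ B hB α hα α hαB
    exact ⟨⟨g, hgG, hgα⟩, hgB⟩

theorem card_blocks_through_dvd_card_pointStab (hGaut : IsAutomGroup G Bs)
    (hft : IsFlagTransitive G Bs) {α : P} {B₀ : Set P} (hB₀ : B₀ ∈ Bs) (hα : α ∈ B₀) :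
    Nat.card {B | B ∈ Bs ∧ α ∈ B} ∣ Nat.card (pointStab G α) := by
  rw [Nat.card_coe_set_eq, ← orbit_pointStab_eq_blocks_through hGaut hft hB₀ hα,
    ← MulAction.index_stabilizer]
  exact Subgroup.index_dvd_card _

end

/-- If `G` is a flag-transitive group of automorphisms of a nontrivial
`2`-`(v, k, λ)` design with replication number `r` and `α` is a point, then
`r` divides `λ · gcd(v-1, |G_α|)`. -/
theorem repl_dvd_lam_mul_gcd (v k lam r : ℕ) (P : Type*) (Bs : Set (Set P))
    (hD : IsTwoDesign v k lam P Bs) (hk : 2 < k) (hkv : k < v)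
    (hr : HasReplication Bs r)
    (G : Subgroup (Equiv.Perm P)) (hGaut : IsAutomGroup G Bs)
    (hft : IsFlagTransitive G Bs) (α : P) :
    r ∣ lam * Nat.gcd (v - 1) (Nat.card (pointStab G α)) := by
  have : Finite P := Nat.finite_of_card_ne_zero (by rw [hD.1]; omega)
  have hcount := hD.repl_mul_sub_one_eq hr α
  rcases eq_or_ne r 0 with rfl | hr0
  · obtain rfl : lam = 0 := by
      simpa [show v - 1 ≠ 0 by omega, eq_comm] using hcount
    simp
  obtain ⟨⟨B₀, hB₀, hα⟩, -⟩ := Nat.card_ne_zero.1 (hr α ▸ hr0)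
  rw [← Nat.gcd_mul_left]
  refine Nat.dvd_gcd ⟨k - 1, by rw [mul_comm lam, hcount]⟩ (Dvd.dvd.mul_left ?_ lam)
  exact hr α ▸ card_blocks_through_dvd_card_pointStab hGaut hft hB₀ hα
end

section
/- Let D be a nontrivial 2-(v,k,λ) design with replication number r, and let G ≤ Aut(D) be flag-transitive (so G is transitive on the point set P). If s is a nontrivial subdegree of G, that is, s is the cardinality of an orbit of a point stabilizer G_α on P other than the orbit {α}, then r divides s·gcd(r,λ). -/
/-!
Let `Δ` be the `G_α`-orbit of `β`; it does not contain `α`. Count the incident pairs `(γ, B)` with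
`γ ∈ Δ` and `B` a block through `α`. Each `γ ∈ Δ` lies on `λ` such blocks. Flag-transitivity
moves any block through `α` to any other by an element of `G_α`, which preserves `Δ`, so every
block through `α` meets `Δ` in the same number `c` of points. Hence `s λ = r c`, so `r ∣ s λ`,
and `r ∣ s r` gives `r ∣ gcd (s r) (s λ) = s · gcd (r, λ)`.
-/

namespace Set

variable {α β : Type*} {s : Set α} {t : Set β}

theorem ncard_mul_eq_ncard_mul (hs : s.Finite) (ht : t.Finite) (r : α → β → Prop) {m n : ℕ}
    (hm : ∀ a ∈ s, {b ∈ t | r a b}.ncard = m) (hn : ∀ b ∈ t, {a ∈ s | r a b}.ncard = n) :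
    s.ncard * m = t.ncard * n := by
  classical
  lift s to Finset α using hs
  lift t to Finset β using ht
  simp only [ncard_coe_finset]
  refine Finset.card_mul_eq_card_mul r (fun a ha => ?_) (fun b hb => ?_)
  · rw [← hm a ha, ← ncard_coe_finset, Finset.coe_bipartiteAbove]; rfl
  · rw [← hn b hb, ← ncard_coe_finset, Finset.coe_bipartiteBelow]; rfl

theorem ncard_dvd_ncard_mul (hs : s.Finite) (ht : t.Finite) (r : α → β → Prop) {m : ℕ}
    (hm : ∀ a ∈ s, {b ∈ t | r a b}.ncard = m)
    (hn : ∀ b ∈ t, ∀ b' ∈ t, {a ∈ s | r a b}.ncard = {a ∈ s | r a b'}.ncard) :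
    t.ncard ∣ s.ncard * m := by
  rcases t.eq_empty_or_nonempty with rfl | ⟨b₀, hb₀⟩
  · rcases s.eq_empty_or_nonempty with rfl | ⟨a, ha⟩
    · simp
    · simp [← hm a ha]
  · exact ⟨_, ncard_mul_eq_ncard_mul hs ht r hm fun b hb => hn b hb b₀ hb₀⟩

end Set

namespace Subgroup

variable {P : Type*} (G : Subgroup (Equiv.Perm P))

def suborbit (α β : P) : Set P :=
  {γ | ∃ g ∈ G, g α = α ∧ g β = γ}

variable {G} {α β : P} {g : Equiv.Perm P}

theorem apply_mem_suborbit (hg : g ∈ G) (hgα : g α = α) {γ : P} (hγ : γ ∈ G.suborbit α β) :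
    g γ ∈ G.suborbit α β := by
  obtain ⟨h, hh, hhα, rfl⟩ := hγ
  exact ⟨g * h, G.mul_mem hg hh, by simp [hhα, hgα], rfl⟩

theorem image_suborbit (hg : g ∈ G) (hgα : g α = α) : ⇑g '' G.suborbit α β = G.suborbit α β := by
  refine Set.Subset.antisymm (Set.image_subset_iff.mpr fun γ => apply_mem_suborbit hg hgα)
    fun γ hγ => ?_
  have hg'α : g⁻¹ α = α := by rw [Equiv.Perm.inv_eq_iff_eq, hgα]
  exact ⟨g⁻¹ γ, apply_mem_suborbit (G.inv_mem hg) hg'α hγ, by simp⟩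

theorem suborbit_self : G.suborbit α α = {α} := by
  ext γ
  constructor
  · rintro ⟨g, -, hgα, rfl⟩
    exact hgα
  · rintro rfl
    exact ⟨1, G.one_mem, rfl, rfl⟩

theorem notMem_suborbit (h : G.suborbit α β ≠ {α}) : α ∉ G.suborbit α β := by
  rintro ⟨g, -, hgα, hgβ⟩
  obtain rfl : β = α := g.injective (hgβ.trans hgα.symm)
  exact h suborbit_self

theorem ncard_suborbit_inter_eq {Bs : Set (Set P)} (hft : IsFlagTransitive G Bs) {B B' : Set P}
    (hB : B ∈ Bs) (hαB : α ∈ B) (hB' : B' ∈ Bs) (hαB' : α ∈ B') :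
    (G.suborbit α β ∩ B).ncard = (G.suborbit α β ∩ B').ncard := by
  obtain ⟨g, hg, hgB, hgα⟩ := hft B hB B' hB' α hαB α hαB'
  calc (G.suborbit α β ∩ B).ncard = (⇑g '' (G.suborbit α β ∩ B)).ncard :=
        (Set.ncard_image_of_injective _ g.injective).symm
    _ = (G.suborbit α β ∩ B').ncard := by
        rw [Set.image_inter g.injective, image_suborbit hg hgα, hgB]

end Subgroup

theorem repl_dvd_subdegree_mul_gcd_general (v k lam r : ℕ) (P : Type*) (Bs : Set (Set P))
    (hD : IsTwoDesign v k lam P Bs) (hkv : k < v)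
    (hr : HasReplication Bs r)
    (G : Subgroup (Equiv.Perm P))
    (hft : IsFlagTransitive G Bs) (α β : P) (s : ℕ)
    (hs : s = Nat.card {γ : P | ∃ g ∈ G, g α = α ∧ g β = γ})
    (hnt : {γ : P | ∃ g ∈ G, g α = α ∧ g β = γ} ≠ {α}) :
    r ∣ s * Nat.gcd r lam := by
  obtain ⟨hv, -, hpair⟩ := hD
  have : Finite P := Nat.finite_of_card_ne_zero (by omega)
  have hαΔ : α ∉ G.suborbit α β := G.notMem_suborbit hnt
  refine dvd_mul_gcd_of_dvd_mul ?_
  rw [hs, Nat.card_coe_set_eq, ← hr α, Nat.card_coe_set_eq]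
  refine Set.ncard_dvd_ncard_mul (Set.toFinite _) (Set.toFinite _) (fun γ B => γ ∈ B)
    (fun γ hγ => ?_) ?_
  · rw [← hpair α γ (ne_of_mem_of_not_mem hγ hαΔ).symm, Nat.card_coe_set_eq]
    simp only [Set.mem_ofPred_eq, and_assoc]
  · rintro B ⟨hB, hαB⟩ B' ⟨hB', hαB'⟩
    simp only [Set.sep_mem_eq]
    exact Subgroup.ncard_suborbit_inter_eq hft hB hαB hB' hαB'

/-- If `G` is a flag-transitive group of automorphisms of a nontrivial
`2`-`(v, k, λ)` design with replication number `r`, and `s` is the size of an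
orbit of the point stabilizer `G_α` on the points which is not the orbit `{α}`
(a nontrivial subdegree of `G`), then `r` divides `s · gcd(r, λ)`. -/
theorem repl_dvd_subdegree_mul_gcd (v k lam r : ℕ) (P : Type*) (Bs : Set (Set P))
    (hD : IsTwoDesign v k lam P Bs) (hk : 2 < k) (hkv : k < v)
    (hr : HasReplication Bs r)
    (G : Subgroup (Equiv.Perm P)) (hGaut : IsAutomGroup G Bs)
    (hft : IsFlagTransitive G Bs) (α β : P) (s : ℕ)
    (hs : s = Nat.card {γ : P | ∃ g ∈ G, g α = α ∧ g β = γ})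
    (hnt : {γ : P | ∃ g ∈ G, g α = α ∧ g β = γ} ≠ {α}) :
    r ∣ s * Nat.gcd r lam :=
  repl_dvd_subdegree_mul_gcd_general v k lam r P Bs hD hkv hr G hft α β s hs hnt
end

section
/- Let D be a nontrivial 2-(v,k,2) design with replication number r, let G ≤ Aut(D) be flag-transitive, and let X be a normal subgroup of G that is isomorphic to PSL(n,q) (n ≥ 3, q = p^f) and acts transitively on the point set P; set d = gcd(n,q−1) and suppose the index [G:X] divides 2df. Let α and β be distinct points of D and let H be a subgroup of G_{α,β}, the subgroup of G fixing both α and β. Then r·|H| divides 4df|X_α|. -/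
/-! The orbit `Δ = β^{G_α}` avoids `α` and is `G_α`-invariant. Flag-transitivity makes `G_α`
transitive on the `r` blocks through `α`, so each of them meets `Δ` in the same number `c` of
points; as every point of `Δ` lies on `λ = 2` blocks with `α`, double counting gives
`r c = 2 |Δ|`. Hence `r ∣ 2 |G_α : G_{αβ}|` and `r |H| ∣ 2 |G_α|`. Since `X ⊴ G`, the index
`|G_α : X_α| = |G_α X : X|` divides `|G : X|`, which divides `2 d f`. -/

open MulAction Subgroup

theorem Subgroup.card_inf_mul_relIndex {M : Type*} [Group M] (H K : Subgroup M) :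
    Nat.card (H ⊓ K : Subgroup M) * H.relIndex K = Nat.card K := by
  rw [← inf_relIndex_right, ← relIndex_bot_left, relIndex_mul_relIndex _ _ _ bot_le inf_le_right,
    relIndex_bot_left]

theorem Subgroup.card_dvd_relIndex_mul_card_inf {M : Type*} [Group M] {X G L : Subgroup M}
    [(X.subgroupOf G).Normal] (hLG : L ≤ G) :
    Nat.card L ∣ X.relIndex G * Nat.card (X ⊓ L : Subgroup M) := by
  have hdvd : X.relIndex L ∣ X.relIndex G := by
    rw [← relIndex_subgroupOf hLG]
    exact relIndex_dvd_index_of_normal _ _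
  rw [← card_inf_mul_relIndex X L, mul_comm]
  exact mul_dvd_mul_right hdvd _

section Perm

variable {P : Type*}

theorem ncard_orbit_mul_card_pointStab (K : Subgroup (Equiv.Perm P)) (β : P) :
    (orbit K β).ncard * Nat.card (pointStab K β) = Nat.card K := by
  have hstab : (stabilizer (Equiv.Perm P) β).subgroupOf K = stabilizer K β := rfl
  rw [← index_stabilizer, ← hstab, pointStab, inf_comm, mul_comm]
  exact card_inf_mul_relIndex _ _

theorem inf_pointStab_of_le {G X : Subgroup (Equiv.Perm P)} (hXG : X ≤ G) (α : P) :
    X ⊓ pointStab G α = pointStab X α := by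
  rw [pointStab, pointStab, ← inf_assoc, inf_of_le_left hXG]

theorem notMem_orbit_pointStab {G : Subgroup (Equiv.Perm P)} {α β : P} (hαβ : α ≠ β) :
    α ∉ orbit (pointStab G α) β := by
  rintro ⟨g, hg⟩
  exact hαβ (g.1.injective (hg.trans g.2.2.symm)).symm

theorem image_orbit_of_mem {K : Subgroup (Equiv.Perm P)} {g : Equiv.Perm P} (hg : g ∈ K)
    (β : P) : ⇑g '' orbit K β = orbit K β :=
  smul_orbit (⟨g, hg⟩ : K) β

theorem IsFlagTransitive.ncard_inter_eq {G : Subgroup (Equiv.Perm P)} {Bs : Set (Set P)}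
    (hft : IsFlagTransitive G Bs) {α : P} {Δ : Set P}
    (hΔ : ∀ g ∈ pointStab G α, ⇑g '' Δ = Δ) {B₁ B₂ : Set P} (hB₁ : B₁ ∈ Bs) (hB₂ : B₂ ∈ Bs)
    (hα₁ : α ∈ B₁) (hα₂ : α ∈ B₂) : (Δ ∩ B₁).ncard = (Δ ∩ B₂).ncard := by
  obtain ⟨g, hgG, hgB, hgα⟩ := hft B₁ hB₁ B₂ hB₂ α hα₁ α hα₂
  have := Set.ncard_image_of_injective (Δ ∩ B₁) g.injective
  rwa [Set.image_inter g.injective, hgB, hΔ g ⟨hgG, hgα⟩, eq_comm] at this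

theorem IsTwoDesign.replication_dvd_mul_ncard [Finite P] {v k lam r : ℕ} {Bs : Set (Set P)}
    (hD : IsTwoDesign v k lam P Bs) (hr : HasReplication Bs r) {G : Subgroup (Equiv.Perm P)}
    (hft : IsFlagTransitive G Bs) {α : P} {Δ : Set P} (hαΔ : α ∉ Δ)
    (hΔ : ∀ g ∈ pointStab G α, ⇑g '' Δ = Δ) : r ∣ lam * Δ.ncard := by
  classical
  have : Fintype P := Fintype.ofFinite P
  set S := {B : Set P | B ∈ Bs ∧ α ∈ B}.toFinset
  set T := Δ.toFinset
  have hS : S.card = r := by rw [← Set.ncard_eq_toFinset_card', ← Nat.card_coe_set_eq, hr]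
  have habove : ∀ B, (T.bipartiteAbove (fun B γ ↦ γ ∈ B) B).card = (Δ ∩ B).ncard := by
    intro B
    rw [Set.ncard_eq_toFinset_card']
    congr 1
    ext γ
    simp [T, Finset.bipartiteAbove]
  have hbelow : ∀ γ ∈ T, (S.bipartiteBelow (fun B γ ↦ γ ∈ B) γ).card = lam := by
    intro γ hγ
    have hαγ : α ≠ γ := fun h ↦ hαΔ (h ▸ Set.mem_toFinset.1 hγ)
    rw [← hD.2.2 α γ hαγ, Nat.card_coe_set_eq, Set.ncard_eq_toFinset_card']
    congr 1
    ext B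
    simp only [S, Finset.bipartiteBelow, Finset.mem_filter, Set.mem_toFinset, Set.mem_ofPred_eq]
    tauto
  obtain ⟨c, hc⟩ : ∃ c, ∀ B ∈ S, (T.bipartiteAbove (fun B γ ↦ γ ∈ B) B).card = c := by
    rcases S.eq_empty_or_nonempty with hS_empty | ⟨B₀, hB₀⟩
    · exact ⟨0, by simp [hS_empty]⟩
    · refine ⟨(Δ ∩ B₀).ncard, fun B hB ↦ ?_⟩
      simp only [S, Set.mem_toFinset] at hB hB₀
      rw [habove, hft.ncard_inter_eq hΔ hB.1 hB₀.1 hB.2 hB₀.2]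
  have := Finset.card_mul_eq_card_mul _ hc hbelow
  rw [hS, ← Set.ncard_eq_toFinset_card', mul_comm (Δ.ncard)] at this
  exact ⟨c, this.symm⟩

end Perm

open scoped MatrixGroups

theorem psl_socle_two_point_div_general (v k r : ℕ) (P : Type*) (Bs : Set (Set P))
    (hD : IsTwoDesign v k 2 P Bs) (hkv : k < v)
    (hr : HasReplication Bs r)
    (G X : Subgroup (Equiv.Perm P))
    (hft : IsFlagTransitive G Bs)
    (hXG : X ≤ G) (hXnorm : ∀ g ∈ G, ∀ x ∈ X, g * x * g⁻¹ ∈ X)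
    (f : ℕ) (d : ℕ)
    (hindex : X.relIndex G ∣ 2 * d * f)
    (α β : P) (hαβ : α ≠ β)
    (H : Subgroup (Equiv.Perm P)) (hHG : H ≤ G)
    (hHfix : ∀ h ∈ H, h α = α ∧ h β = β) :
    r * Nat.card H ∣ 4 * d * f * Nat.card (pointStab X α) := by
  have : Finite P := Nat.finite_of_card_ne_zero (by have := hD.1; omega)
  have : (X.subgroupOf G).Normal := (normal_subgroupOf_iff hXG).2 fun x g hx hg ↦ hXnorm g hg x hx
  set Gα := pointStab G α
  have hr_dvd : r ∣ 2 * (orbit Gα β).ncard :=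
    hD.replication_dvd_mul_ncard hr hft (notMem_orbit_pointStab hαβ)
      fun g hg ↦ image_orbit_of_mem hg β
  have hH : H ≤ pointStab Gα β := fun h hh ↦ ⟨⟨hHG hh, (hHfix h hh).1⟩, (hHfix h hh).2⟩
  have hGα : Nat.card Gα ∣ X.relIndex G * Nat.card (pointStab X α) := by
    rw [← inf_pointStab_of_le hXG]
    exact card_dvd_relIndex_mul_card_inf inf_le_left
  calc r * Nat.card H ∣ 2 * (orbit Gα β).ncard * Nat.card (pointStab Gα β) :=
        mul_dvd_mul hr_dvd (card_dvd_of_le hH)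
    _ = 2 * Nat.card Gα := by rw [mul_assoc, ncard_orbit_mul_card_pointStab]
    _ ∣ 2 * (2 * d * f * Nat.card (pointStab X α)) :=
        mul_dvd_mul_left 2 (hGα.trans (mul_dvd_mul_right hindex _))
    _ = 4 * d * f * Nat.card (pointStab X α) := by ring

/-- Lemma 2.5 of the paper: if `H` is a subgroup of the two-point stabilizer
`G_{α,β}`, then `r · |H|` divides `4 d f |X_α|`. -/
theorem psl_socle_two_point_div (v k r : ℕ) (P : Type*) (Bs : Set (Set P))
    (hD : IsTwoDesign v k 2 P Bs) (hk : 2 < k) (hkv : k < v)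
    (hr : HasReplication Bs r)
    (G X : Subgroup (Equiv.Perm P)) (hGaut : IsAutomGroup G Bs)
    (hft : IsFlagTransitive G Bs)
    (hXG : X ≤ G) (hXnorm : ∀ g ∈ G, ∀ x ∈ X, g * x * g⁻¹ ∈ X)
    (hXtrans : ∀ x y : P, ∃ g ∈ X, g x = y)
    (n p f : ℕ) (hn : 3 ≤ n) [hp : Fact p.Prime] (hf : 0 < f)
    (hX : Nonempty (X ≃* Matrix.ProjectiveSpecialLinearGroup (Fin n) (GaloisField p f)))
    (d : ℕ) (hd : d = Nat.gcd n (p ^ f - 1))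
    (hindex : X.relIndex G ∣ 2 * d * f)
    (α β : P) (hαβ : α ≠ β)
    (H : Subgroup (Equiv.Perm P)) (hHG : H ≤ G)
    (hHfix : ∀ h ∈ H, h α = α ∧ h β = β) :
    r * Nat.card H ∣ 4 * d * f * Nat.card (pointStab X α) :=
  psl_socle_two_point_div_general v k r P Bs hD hkv hr G X hft hXG hXnorm f d hindex α β hαβ H hHG
    hHfix
end

section
/- Let D be a nontrivial 2-(v,k,2) design with b blocks and replication number r, and let G ≤ Aut(D) be flag-transitive and leave invariant a partition C of the point set P into y parts each of size x, where 1 < x < v. Then v = x², y = x, k = x + 2, r = 2x − 2, b = 2x²(x−1)/(x+2), every nonempty intersection of a block with a part of C has size 2, and x + 2 divides 24 with x even and x ≥ 4; consequently x ∈ {4, 6, 10, 22}. -/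
/-- `C` is a partition of `P` into nonempty parts. -/
def IsPartitionOn (P : Type*) (C : Set (Set P)) : Prop :=
  (∀ Δ ∈ C, Δ.Nonempty) ∧ ∀ x : P, ∃! Δ : Set P, Δ ∈ C ∧ x ∈ Δ

/-- `C` is a `G`-invariant partition of the point set. -/
def IsInvariantPartition {P : Type*} (G : Subgroup (Equiv.Perm P)) (C : Set (Set P)) : Prop :=
  IsPartitionOn P C ∧ ∀ g ∈ G, ∀ Δ ∈ C, (⇑g) '' Δ ∈ C

theorem Set.ncard_mul_eq_ncard_mul_s12 {α β : Type*} {s : Set α} {t : Set β} (hs : s.Finite)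
    (ht : t.Finite) (r : α → β → Prop) {m n : ℕ}
    (hm : ∀ a ∈ s, {b ∈ t | r a b}.ncard = m) (hn : ∀ b ∈ t, {a ∈ s | r a b}.ncard = n) :
    s.ncard * m = t.ncard * n := by
  classical
  rw [Set.ncard_eq_toFinset_card s hs, Set.ncard_eq_toFinset_card t ht]
  refine Finset.card_mul_eq_card_mul r (fun a ha => ?_) (fun b hb => ?_)
  · rw [← Set.ncard_coe_finset, Finset.coe_bipartiteAbove]
    simpa only [Set.Finite.mem_toFinset] using hm a (hs.mem_toFinset.mp ha)
  · rw [← Set.ncard_coe_finset, Finset.coe_bipartiteBelow]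
    simpa only [Set.Finite.mem_toFinset] using hn b (ht.mem_toFinset.mp hb)

theorem linearIndependent_of_dotProduct_eq_ite {ι n K : Type*} [Fintype ι] [Fintype n]
    [DecidableEq ι] [Field K] [LinearOrder K] [IsStrictOrderedRing K] (u : ι → n → K) {a c : K}
    (ha : 0 < a) (hc : 0 ≤ c) (hu : ∀ i j, u i ⬝ᵥ u j = if i = j then a + c else c) :
    LinearIndependent K u := by
  rw [Fintype.linearIndependent_iff]
  intro g hg
  have hdot : ∀ j, g j * a + c * ∑ i, g i = 0 := by
    intro j
    have hsplit : ∀ i, g i * (if i = j then a + c else c) =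
        (if i = j then g i * a else 0) + c * g i := by
      intro i; split_ifs <;> ring
    have := congrArg (· ⬝ᵥ u j) hg
    simpa only [sum_dotProduct, smul_dotProduct, hu, smul_eq_mul, zero_dotProduct, hsplit,
      Finset.sum_add_distrib, Finset.sum_ite_eq', Finset.mem_univ, if_true, Finset.mul_sum]
      using this
  have hsum : ∑ i, g i = 0 := by
    have htot : (∑ i, g i) * (a + Fintype.card ι * c) = 0 := by
      have := Finset.sum_eq_zero (s := Finset.univ) (fun j _ => hdot j)
      rw [Finset.sum_add_distrib, ← Finset.sum_mul, Finset.sum_const, Finset.card_univ,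
        nsmul_eq_mul] at this
      linear_combination this
    exact (mul_eq_zero.mp htot).resolve_right (by positivity)
  intro j
  simpa [hsum, ha.ne'] using hdot j

def IsPairBalanced {P : Type*} (Bs : Set (Set P)) (lam : ℕ) : Prop :=
  ∀ p q : P, p ≠ q → Nat.card {B : Set P | B ∈ Bs ∧ p ∈ B ∧ q ∈ B} = lam

section Counting

variable {P : Type*} [Finite P] {Bs : Set (Set P)} {r : ℕ}

theorem HasReplication.card_blocks_mul_eq (hr : HasReplication Bs r) {k : ℕ}
    (hk : ∀ B ∈ Bs, Nat.card B = k) : Nat.card Bs * k = Nat.card P * r := by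
  rw [Nat.card_coe_set_eq, ← Set.ncard_univ]
  refine Set.ncard_mul_eq_ncard_mul_s12 (Set.toFinite _) (Set.toFinite _) (fun B p => p ∈ B)
    (fun B hB => ?_) (fun p _ => ?_)
  · simpa only [Set.mem_univ, true_and, Set.ofPred_mem_eq, Nat.card_coe_set_eq] using hk B hB
  · simpa only [Nat.card_coe_set_eq] using hr p

theorem HasReplication.mul_sub_one_eq (hr : HasReplication Bs r) {lam : ℕ}
    (hpair : IsPairBalanced Bs lam) {S : Set P} {α : P} (hα : α ∈ S) {m : ℕ}
    (hm : ∀ B ∈ Bs, α ∈ B → (B ∩ S).ncard = m) : r * (m - 1) = lam * (S.ncard - 1) := by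
  have hcount := Set.ncard_mul_eq_ncard_mul_s12 (s := {B ∈ Bs | α ∈ B}) (t := S \ {α})
    (Set.toFinite _) (Set.toFinite _) (fun B p => p ∈ B) (m := m - 1) (n := lam)
    (fun B ⟨hB, hαB⟩ => ?_) (fun p ⟨_, hpα⟩ => ?_)
  · rw [← Nat.card_coe_set_eq, hr α, Set.ncard_sdiff_singleton_of_mem hα] at hcount
    rw [hcount, mul_comm]
  · have : {p ∈ S \ {α} | p ∈ B} = (B ∩ S) \ {α} := by
      ext; simp only [Set.mem_ofPred_eq, Set.mem_sdiff, Set.mem_inter_iff]; tauto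
    rw [this, Set.ncard_sdiff_singleton_of_mem (Set.mem_inter hαB hα), hm B hB hαB]
  · rw [← hpair α p (Ne.symm hpα), Nat.card_coe_set_eq]
    simp only [Set.mem_ofPred_eq, and_assoc]

theorem HasReplication.card_le_card_blocks (hr : HasReplication Bs r) {lam : ℕ}
    (hpair : IsPairBalanced Bs lam) (hlr : lam < r) : Nat.card P ≤ Nat.card Bs := by
  classical
  have := Fintype.ofFinite P
  have := Fintype.ofFinite Bs
  let χ : P → Bs → ℚ := fun p B => if p ∈ (B : Set P) then 1 else 0
  have hdot : ∀ p q, χ p ⬝ᵥ χ q = if p = q then ((r : ℚ) - lam) + lam else lam := by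
    intro p q
    have hcount : χ p ⬝ᵥ χ q = Nat.card {B : Set P | B ∈ Bs ∧ p ∈ B ∧ q ∈ B} := by
      simp only [dotProduct, χ, ite_zero_mul_ite_zero, mul_one, Finset.sum_boole]
      rw [← Fintype.card_subtype, ← Nat.card_eq_fintype_card]
      exact_mod_cast Nat.card_congr
        (Equiv.subtypeSubtypeEquivSubtypeInter (· ∈ Bs) fun B => p ∈ B ∧ q ∈ B)
    split_ifs with hpq
    · subst hpq
      simpa only [and_self, sub_add_cancel, hr p] using hcount
    · rw [hcount, hpair p q hpq]
  have hχ := linearIndependent_of_dotProduct_eq_ite χ (sub_pos.mpr (by exact_mod_cast hlr))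
    (Nat.cast_nonneg lam) hdot
  simpa only [Nat.card_eq_fintype_card, Module.finrank_fintype_fun_eq_card]
    using hχ.fintype_card_le_finrank

theorem IsPartitionOn.card_mul_eq {C : Set (Set P)} (hC : IsPartitionOn P C) {x : ℕ}
    (hx : ∀ Δ ∈ C, Nat.card Δ = x) : Nat.card C * x = Nat.card P := by
  rw [Nat.card_coe_set_eq, ← Set.ncard_univ, ← mul_one Set.univ.ncard]
  refine Set.ncard_mul_eq_ncard_mul_s12 (Set.toFinite _) (Set.toFinite _) (fun Δ p => p ∈ Δ)
    (fun Δ hΔ => ?_) (fun p _ => ?_)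
  · simpa only [Set.mem_univ, true_and, Set.ofPred_mem_eq, Nat.card_coe_set_eq] using hx Δ hΔ
  · obtain ⟨Δ, hΔ, hΔuniq⟩ := hC.2 p
    exact Set.ncard_eq_one.mpr ⟨Δ, Set.eq_singleton_iff_unique_mem.mpr ⟨hΔ, hΔuniq⟩⟩

end Counting

theorem IsFlagTransitive.ncard_inter_eq_s12 {P : Type*} {G : Subgroup (Equiv.Perm P)}
    {Bs C : Set (Set P)} (hft : IsFlagTransitive G Bs) (hC : IsInvariantPartition G C)
    {B₁ B₂ Δ₁ Δ₂ : Set P} (hB₁ : B₁ ∈ Bs) (hB₂ : B₂ ∈ Bs) (hΔ₁ : Δ₁ ∈ C) (hΔ₂ : Δ₂ ∈ C)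
    (h₁ : (B₁ ∩ Δ₁).Nonempty) (h₂ : (B₂ ∩ Δ₂).Nonempty) :
    (B₁ ∩ Δ₁).ncard = (B₂ ∩ Δ₂).ncard := by
  obtain ⟨α, hαB, hαΔ⟩ := h₁
  obtain ⟨β, hβB, hβΔ⟩ := h₂
  obtain ⟨g, hg, hgB, hgα⟩ := hft B₁ hB₁ B₂ hB₂ α hαB β hβB
  -- `g Δ₁` and `Δ₂` are parts of `C` containing `β`
  have hgΔ : (⇑g) '' Δ₁ = Δ₂ :=
    (hC.1.2 β).unique ⟨hC.2 g hg Δ₁ hΔ₁, α, hαΔ, hgα⟩ ⟨hΔ₂, hβΔ⟩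
  rw [← hgB, ← hgΔ, ← Set.image_inter g.injective, Set.ncard_image_of_injective _ g.injective]

theorem lt_of_mul_sub_one_eq {r k lam v : ℕ} (h : r * (k - 1) = lam * (v - 1)) (hkv : k < v)
    (hv : 2 ≤ v) (hlam : 0 < lam) : lam < r := by
  have hk : 1 ≤ k := by
    by_contra! hk0
    simp only [Nat.lt_one_iff.mp hk0, zero_tsub, mul_zero, zero_eq_mul] at h
    omega
  refine lt_of_mul_lt_mul_right (a := k - 1) ?_ (Nat.zero_le _)
  calc lam * (k - 1) < lam * (v - 1) := Nat.mul_lt_mul_of_pos_left (by omega) hlam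
    _ = r * (k - 1) := h.symm

theorem imprimitive_params_of_counts {r k c v x y : ℕ} (hk : r * (k - 1) = 2 * (v - 1))
    (hc : r * (c - 1) = 2 * (x - 1)) (hv : y * x = v) (hkr : k ≤ r) (hx : 2 ≤ x)
    (hxv : x < v) : c = 2 ∧ k = x + 2 ∧ y = x ∧ r + 2 = 2 * x := by
  have hy : 2 ≤ y := by
    by_contra! hy
    interval_cases y <;> omega
  have hk1 : 1 ≤ k := by
    by_contra! hk0
    simp only [Nat.lt_one_iff.mp hk0, zero_tsub, mul_zero] at hk
    omega
  have hc2 : 2 ≤ c := by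
    by_contra! hc1
    simp only [Nat.sub_eq_zero_of_le (Nat.le_of_lt_succ hc1), mul_zero] at hc
    omega
  have hr : 0 < r := by
    by_contra! hr0
    simp only [Nat.le_zero.mp hr0, zero_mul] at hk
    omega
  zify [hk1, hc2.trans' one_le_two, hxv.le.trans' (hx.trans' one_le_two),
    hx.trans' one_le_two] at hk hc hkr
  have hvZ : (y * x : ℤ) = v := by exact_mod_cast hv
  set s : ℤ := k - 1 - y * (c - 1)
  have hs : r * s = 2 * (y - 1) := by linear_combination hk - y * hc - 2 * hvZ
  have hs1 : 1 ≤ s := by nlinarith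
  have hkc : (k : ℤ) - c = x * s := by
    refine mul_left_cancel₀ (b := (k : ℤ) - c) (Int.natCast_pos.mpr hr).ne' ?_
    linear_combination hk - hc - x * hs - 2 * hvZ
  have hcZ : (c : ℤ) = 2 := by
    by_contra hc3
    have hc3 : (3 : ℤ) ≤ c := by omega
    nlinarith [mul_nonneg (Int.natCast_nonneg r) (sub_nonneg.mpr hc3),
      mul_nonneg (Int.natCast_nonneg x) (sub_nonneg.mpr hs1)]
  have hrZ : (r : ℤ) = 2 * x - 2 := by rw [hcZ] at hc; linarith
  have hsZ : s = 1 := by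
    by_contra hs2
    have hs2 : 2 ≤ s := by omega
    nlinarith [mul_nonneg (Int.natCast_nonneg x) (sub_nonneg.mpr hs2)]
  rw [hsZ] at hs hkc
  omega

theorem dvd_24_of_mul_eq {b x : ℕ} (hx : 1 ≤ x) (h : b * (x + 2) = 2 * x ^ 2 * (x - 1)) :
    x + 2 ∣ 24 := by
  have hZ : (b : ℤ) * (x + 2) = 2 * x ^ 2 * (x - 1) := by exact_mod_cast h
  have : ((x + 2 : ℕ) : ℤ) ∣ (24 : ℕ) :=
    ⟨2 * x ^ 2 - 6 * x + 12 - b, by push_cast; linear_combination hZ⟩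
  exact Int.natCast_dvd_natCast.mp this

theorem eq_of_dvd_24 {x : ℕ} (hdvd : x + 2 ∣ 24) (hx : 4 ≤ x) :
    x = 4 ∨ x = 6 ∨ x = 10 ∨ x = 22 := by
  have : x ≤ 22 := by have := Nat.le_of_dvd (by norm_num) hdvd; omega
  interval_cases x <;> simp_all

theorem imprimitive_parameters_general (v k b r x y : ℕ) (P : Type*) (Bs : Set (Set P))
    (hD : IsTwoDesign v k 2 P Bs) (hkv : k < v)
    (hb : Nat.card Bs = b) (hr : HasReplication Bs r)
    (G : Subgroup (Equiv.Perm P))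
    (hft : IsFlagTransitive G Bs)
    (C : Set (Set P)) (hC : IsInvariantPartition G C)
    (hCy : Nat.card C = y) (hCx : ∀ Δ ∈ C, Nat.card Δ = x)
    (hx1 : 1 < x) (hxv : x < v) :
    v = x ^ 2 ∧ y = x ∧ k = x + 2 ∧ r = 2 * x - 2 ∧
    b * (x + 2) = 2 * x ^ 2 * (x - 1) ∧
    (∀ B ∈ Bs, ∀ Δ ∈ C, (B ∩ Δ).Nonempty → Nat.card ↥(B ∩ Δ) = 2) ∧
    (x + 2) ∣ 24 ∧ Even x ∧ 4 ≤ x ∧ (x = 4 ∨ x = 6 ∨ x = 10 ∨ x = 22) := by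
  obtain ⟨hvP, hBk, hpair⟩ := hD
  have : Finite P := Nat.finite_of_card_ne_zero (by omega)
  obtain ⟨α⟩ : Nonempty P := (Nat.card_pos_iff.mp (by omega)).1
  have hpt : r * (k - 1) = 2 * (v - 1) := by
    simpa only [Set.ncard_univ, hvP] using hr.mul_sub_one_eq hpair (Set.mem_univ α)
      fun B hB _ => by rw [Set.inter_univ, ← Nat.card_coe_set_eq, hBk B hB]
  have hlr : 2 < r := lt_of_mul_sub_one_eq hpt hkv (by omega) two_pos
  have hfisher : v ≤ b := hvP ▸ hb ▸ hr.card_le_card_blocks hpair hlr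
  have hflag : b * k = v * r := hvP ▸ hb ▸ hr.card_blocks_mul_eq hBk
  have hkr : k ≤ r :=
    Nat.le_of_mul_le_mul_left (hflag ▸ Nat.mul_le_mul_right k hfisher) (by omega)
  obtain ⟨Δ₀, ⟨hΔ₀, hαΔ₀⟩, -⟩ := hC.1.2 α
  obtain ⟨B₀, hB₀, hαB₀⟩ : ∃ B ∈ Bs, α ∈ B :=
    Set.nonempty_of_ncard_ne_zero (s := {B | B ∈ Bs ∧ α ∈ B})
      (by rw [← Nat.card_coe_set_eq, hr α]; omega)
  have hinter : ∀ B ∈ Bs, ∀ Δ ∈ C, (B ∩ Δ).Nonempty → (B ∩ Δ).ncard = (B₀ ∩ Δ₀).ncard :=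
    fun B hB Δ hΔ hne => hft.ncard_inter_eq_s12 hC hB hB₀ hΔ hΔ₀ hne ⟨α, hαB₀, hαΔ₀⟩
  have hpart : r * ((B₀ ∩ Δ₀).ncard - 1) = 2 * (x - 1) := by
    rw [← hCx Δ₀ hΔ₀, Nat.card_coe_set_eq]
    exact hr.mul_sub_one_eq hpair hαΔ₀ fun B hB hαB => hinter B hB Δ₀ hΔ₀ ⟨α, hαB, hαΔ₀⟩
  have hyx : y * x = v := hCy ▸ hvP ▸ hC.1.card_mul_eq hCx
  obtain ⟨hc, hkx, hy, hrx⟩ := imprimitive_params_of_counts hpt hpart hyx hkr hx1 hxv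
  have hbx : b * (x + 2) = 2 * x ^ 2 * (x - 1) := by
    rw [← hkx, hflag, ← hyx, hy, show r = 2 * (x - 1) by omega]; ring
  have hx4 : 4 ≤ x := by omega
  have hdvd := dvd_24_of_mul_eq hx1.le hbx
  have hxs := eq_of_dvd_24 hdvd hx4
  refine ⟨by rw [← hyx, hy, sq], hy, hkx, by omega, hbx, fun B hB Δ hΔ hne => ?_, hdvd, ?_, hx4,
    hxs⟩
  · rw [Nat.card_coe_set_eq, hinter B hB Δ hΔ hne, hc]
  · rcases hxs with rfl | rfl | rfl | rfl <;> decide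

/-- Claim 1 in the proof of Theorem 1.1: if a flag-transitive group `G` of automorphisms
of a nontrivial `2`-`(v, k, 2)` design leaves invariant a partition of the point set into
`y` parts of size `x`, with `1 < x < v`, then `v = x²`, `y = x`, `k = x + 2`,
`r = 2x - 2`, `b = 2x²(x-1)/(x+2)`, every nonempty block-part intersection has size `2`,
`x + 2` divides `24`, `x` is even, `x ≥ 4`, and hence `x ∈ {4, 6, 10, 22}`. -/
theorem imprimitive_parameters (v k b r x y : ℕ) (P : Type*) (Bs : Set (Set P))
    (hD : IsTwoDesign v k 2 P Bs) (hk : 2 < k) (hkv : k < v)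
    (hb : Nat.card Bs = b) (hr : HasReplication Bs r)
    (G : Subgroup (Equiv.Perm P)) (hGaut : IsAutomGroup G Bs)
    (hft : IsFlagTransitive G Bs)
    (C : Set (Set P)) (hC : IsInvariantPartition G C)
    (hCy : Nat.card C = y) (hCx : ∀ Δ ∈ C, Nat.card Δ = x)
    (hx1 : 1 < x) (hxv : x < v) :
    v = x ^ 2 ∧ y = x ∧ k = x + 2 ∧ r = 2 * x - 2 ∧
    b * (x + 2) = 2 * x ^ 2 * (x - 1) ∧
    (∀ B ∈ Bs, ∀ Δ ∈ C, (B ∩ Δ).Nonempty → Nat.card ↥(B ∩ Δ) = 2) ∧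
    (x + 2) ∣ 24 ∧ Even x ∧ 4 ≤ x ∧ (x = 4 ∨ x = 6 ∨ x = 10 ∨ x = 22) :=
  imprimitive_parameters_general v k b r x y P Bs hD hkv hb hr G hft C hC hCy hCx hx1 hxv
end

section
/- Let S = (P,L) be a nontrivial 2-(v,k,1) design (so 2 < k < v), and let ℬ = { ℓ∖{α} : ℓ ∈ L, α ∈ ℓ }. Then D(S) = (P,ℬ) is a 2-(v, k−1, k−2) design, its number of blocks equals k·|L|, and this number is strictly greater than v (so D(S) is non-symmetric). -/
open Set

lemma Set.Finite.ncard_biUnion_of_ncard_eq {ι α : Type*} {t : Set ι} (ht : t.Finite)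
    {s : ι → Set α} {c : ℕ} (hs : ∀ i ∈ t, (s i).ncard = c) (hfin : ∀ i ∈ t, (s i).Finite)
    (hdisj : t.PairwiseDisjoint s) : (⋃ i ∈ t, s i).ncard = c * t.ncard := by
  rw [ht.ncard_biUnion hfin hdisj, finsum_mem_congr rfl hs, ← finsum_one, mul_finsum_mem' _ _ ht]
  simp

lemma Set.Finite.ncard_biUnion_le_of_ncard_le {ι α : Type*} {t : Set ι} (ht : t.Finite)
    {s : ι → Set α} {c : ℕ} (hs : ∀ i ∈ t, (s i).ncard ≤ c) :
    (⋃ i ∈ t, s i).ncard ≤ c * t.ncard :=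
  calc (⋃ i ∈ t, s i).ncard = (⋃ i ∈ ht.toFinset, s i).ncard := by simp
    _ ≤ ∑ i ∈ ht.toFinset, (s i).ncard := ht.toFinset.set_ncard_biUnion_le s
    _ ≤ ht.toFinset.card • c := Finset.sum_le_card_nsmul _ _ _ (by simpa using hs)
    _ = c * t.ncard := by rw [ncard_eq_toFinset_card t ht, smul_eq_mul, mul_comm]

lemma Set.injOn_sdiff_singleton {α : Type*} (s : Set α) : InjOn (fun a => s \ {a}) s := by
  intro a _ b hb (hab : s \ {a} = s \ {b})
  by_contra hne
  have hb' : b ∈ s \ {a} := ⟨hb, Ne.symm hne⟩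
  exact (hab ▸ hb').2 rfl

section

variable {P : Type*}

def pointDeletedBlocks (L : Set (Set P)) : Set (Set P) :=
  {B | ∃ ℓ ∈ L, ∃ a ∈ ℓ, B = ℓ \ {a}}

lemma pointDeletedBlocks_eq_biUnion (L : Set (Set P)) :
    pointDeletedBlocks L = ⋃ ℓ ∈ L, (fun a => ℓ \ {a}) '' ℓ := by
  ext B
  simp [pointDeletedBlocks, eq_comm]

namespace IsTwoDesign

variable {v k lam : ℕ} {L : Set (Set P)}

lemma finite (hS : IsTwoDesign v k lam P L) (hv : v ≠ 0) : Finite P :=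
  Nat.finite_of_card_ne_zero (hS.1 ▸ hv)

lemma ncard_of_mem (hS : IsTwoDesign v k lam P L) {ℓ : Set P} (hℓ : ℓ ∈ L) : ℓ.ncard = k :=
  (Nat.card_coe_set_eq ℓ).symm.trans (hS.2.1 ℓ hℓ)

lemma existsUnique_line (hS : IsTwoDesign v k 1 P L) {x y : P} (hxy : x ≠ y) :
    ∃! ℓ, ℓ ∈ L ∧ x ∈ ℓ ∧ y ∈ ℓ := by
  obtain ⟨ℓ, hℓ⟩ := ncard_eq_one.mp ((Nat.card_coe_set_eq _).symm.trans (hS.2.2 x y hxy))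
  exact ⟨ℓ, (Set.ext_iff.mp hℓ ℓ).mpr rfl, fun ℓ' h => (Set.ext_iff.mp hℓ ℓ').mp h⟩

lemma eq_of_mem_of_mem (hS : IsTwoDesign v k 1 P L) {x y : P} (hxy : x ≠ y) {ℓ ℓ' : Set P}
    (hℓ : ℓ ∈ L) (hxℓ : x ∈ ℓ) (hyℓ : y ∈ ℓ) (hℓ' : ℓ' ∈ L) (hxℓ' : x ∈ ℓ') (hyℓ' : y ∈ ℓ') :
    ℓ = ℓ' :=
  (hS.existsUnique_line hxy).unique ⟨hℓ, hxℓ, hyℓ⟩ ⟨hℓ', hxℓ', hyℓ'⟩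

lemma nontrivial_sdiff_singleton (hS : IsTwoDesign v k lam P L) (hk : 2 < k) {ℓ : Set P}
    (hℓ : ℓ ∈ L) (a : P) : (ℓ \ {a}).Nontrivial := by
  have h := pred_ncard_le_ncard_sdiff_singleton ℓ a
  rw [hS.ncard_of_mem hℓ] at h
  exact (one_lt_ncard_iff_nontrivial_and_finite.mp (by omega)).1

lemma pairwiseDisjoint_image_sdiff_singleton (hS : IsTwoDesign v k 1 P L) (hk : 2 < k) :
    L.PairwiseDisjoint fun ℓ => (fun a => ℓ \ {a}) '' ℓ := by
  intro ℓ hℓ ℓ' hℓ' hne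
  rw [Function.onFun, disjoint_left]
  rintro _ ⟨a, -, rfl⟩ ⟨a', -, hB : ℓ' \ {a'} = ℓ \ {a}⟩
  obtain ⟨x, hx, y, hy, hxy⟩ := hS.nontrivial_sdiff_singleton hk hℓ a
  have hx' : x ∈ ℓ' \ {a'} := hB.symm ▸ hx
  have hy' : y ∈ ℓ' \ {a'} := hB.symm ▸ hy
  exact hne (hS.eq_of_mem_of_mem hxy hℓ hx.1 hy.1 hℓ' hx'.1 hy'.1)

lemma ncard_pointDeletedBlocks [Finite P] (hS : IsTwoDesign v k 1 P L) (hk : 2 < k) :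
    (pointDeletedBlocks L).ncard = k * L.ncard := by
  rw [pointDeletedBlocks_eq_biUnion]
  exact L.toFinite.ncard_biUnion_of_ncard_eq
    (fun ℓ hℓ => by rw [(injOn_sdiff_singleton ℓ).ncard_image, hS.ncard_of_mem hℓ])
    (fun ℓ _ => toFinite _) (hS.pairwiseDisjoint_image_sdiff_singleton hk)

lemma ncard_of_mem_pointDeletedBlocks (hS : IsTwoDesign v k lam P L) {B : Set P}
    (hB : B ∈ pointDeletedBlocks L) : B.ncard = k - 1 := by
  obtain ⟨ℓ, hℓ, a, ha, rfl⟩ := hB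
  rw [ncard_sdiff_singleton_of_mem ha, hS.ncard_of_mem hℓ]

lemma setOf_mem_pointDeletedBlocks_eq (hS : IsTwoDesign v k 1 P L) {x y : P} (hxy : x ≠ y)
    {ℓ : Set P} (hℓ : ℓ ∈ L) (hx : x ∈ ℓ) (hy : y ∈ ℓ) :
    {B | B ∈ pointDeletedBlocks L ∧ x ∈ B ∧ y ∈ B} = (fun a => ℓ \ {a}) '' (ℓ \ {x, y}) := by
  ext B
  constructor
  · rintro ⟨⟨ℓ', hℓ', a, ha, rfl⟩, ⟨hxℓ', hxa⟩, ⟨hyℓ', hya⟩⟩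
    obtain rfl := hS.eq_of_mem_of_mem hxy hℓ hx hy hℓ' hxℓ' hyℓ'
    refine ⟨a, ⟨ha, ?_⟩, rfl⟩
    rintro (rfl | rfl) <;> simp_all
  · rintro ⟨a, ⟨ha, hxya⟩, rfl⟩
    simp only [mem_insert_iff, mem_singleton_iff, not_or] at hxya
    exact ⟨⟨ℓ, hℓ, a, ha, rfl⟩, ⟨hx, Ne.symm hxya.1⟩, ⟨hy, Ne.symm hxya.2⟩⟩

lemma ncard_setOf_mem_pointDeletedBlocks (hS : IsTwoDesign v k 1 P L) {x y : P} (hxy : x ≠ y) :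
    {B | B ∈ pointDeletedBlocks L ∧ x ∈ B ∧ y ∈ B}.ncard = k - 2 := by
  obtain ⟨ℓ, ⟨hℓ, hx, hy⟩, -⟩ := hS.existsUnique_line hxy
  rw [hS.setOf_mem_pointDeletedBlocks_eq hxy hℓ hx hy,
    ((injOn_sdiff_singleton ℓ).mono sdiff_subset).ncard_image,
    ncard_sdiff (pair_subset hx hy), ncard_pair hxy, hS.ncard_of_mem hℓ]

lemma isTwoDesign_pointDeletedBlocks (hS : IsTwoDesign v k 1 P L) :
    IsTwoDesign v (k - 1) (k - 2) P (pointDeletedBlocks L) := by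
  refine ⟨hS.1, fun B hB => ?_, fun x y hxy => ?_⟩ <;> rw [Nat.card_coe_set_eq]
  · exact hS.ncard_of_mem_pointDeletedBlocks hB
  · exact hS.ncard_setOf_mem_pointDeletedBlocks hxy

lemma lt_mul_ncard (hS : IsTwoDesign v k 1 P L) (hk : 0 < k) (hkv : k < v) :
    v < k * L.ncard := by
  obtain ⟨⟨x⟩, _⟩ := Nat.card_pos_iff.mp (hS.1 ▸ (by omega : 0 < v))
  set Lx := {ℓ ∈ L | x ∈ ℓ}
  have hcover : (univ \ {x} : Set P) ⊆ ⋃ ℓ ∈ Lx, ℓ \ {x} := by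
    rintro y ⟨-, hyx : y ≠ x⟩
    obtain ⟨ℓ, ⟨hℓ, hxℓ, hyℓ⟩, -⟩ := hS.existsUnique_line hyx.symm
    exact mem_biUnion ⟨hℓ, hxℓ⟩ ⟨hyℓ, hyx⟩
  have hv : v - 1 ≤ (k - 1) * Lx.ncard :=
    calc v - 1 = (univ \ {x} : Set P).ncard := by
          rw [ncard_sdiff_singleton_of_mem (mem_univ x), ncard_univ, hS.1]
      _ ≤ (⋃ ℓ ∈ Lx, ℓ \ {x}).ncard := ncard_le_ncard hcover
      _ ≤ (k - 1) * Lx.ncard := Lx.toFinite.ncard_biUnion_le_of_ncard_le fun ℓ hℓ => by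
          rw [ncard_sdiff_singleton_of_mem hℓ.2, hS.ncard_of_mem hℓ.1]
  have hr : 2 ≤ Lx.ncard := by
    by_contra! h
    have := Nat.mul_le_mul_left (k - 1) (Nat.le_of_lt_succ h)
    omega
  have hrL : Lx.ncard ≤ L.ncard := ncard_le_ncard (sep_subset _ _)
  calc v < (k - 1) * Lx.ncard + Lx.ncard := by omega
    _ = k * Lx.ncard := by rw [← Nat.succ_mul, Nat.succ_eq_add_one, Nat.sub_add_cancel hk]
    _ ≤ k * L.ncard := Nat.mul_le_mul_left k hrL

end IsTwoDesign

end

/-- Construction 1.2: from a nontrivial `2`-`(v, k, 1)` design (linear space) `S = (P, L)`,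
removing one point from each line yields a `2`-`(v, k-1, k-2)` design with `k · |L|`
blocks, and this number of blocks exceeds `v` (the design is non-symmetric). -/
theorem construction_gives_design (v k : ℕ) (P : Type*) (L : Set (Set P))
    (hS : IsTwoDesign v k 1 P L) (hk : 2 < k) (hkv : k < v)
    (Bs : Set (Set P)) (hBs : Bs = {B : Set P | ∃ ℓ ∈ L, ∃ a ∈ ℓ, B = ℓ \ {a}}) :
    IsTwoDesign v (k - 1) (k - 2) P Bs ∧
    Nat.card Bs = k * Nat.card L ∧
    v < Nat.card Bs := by
  have hBs : Bs = pointDeletedBlocks L := hBs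
  have : Finite P := hS.finite (by omega)
  have hcard : Nat.card Bs = k * Nat.card L := by
    rw [Nat.card_coe_set_eq, Nat.card_coe_set_eq, hBs, hS.ncard_pointDeletedBlocks hk]
  refine ⟨hBs ▸ hS.isTwoDesign_pointDeletedBlocks, hcard, ?_⟩
  rw [hcard, Nat.card_coe_set_eq]
  exact hS.lt_mul_ncard (by omega) hkv
end
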